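/- For every positive integer n₀ and positive integer l, there exists k ≥ 1 such that λ(n₀ + l·k) = -λ(n₀). -/

import Mathlib

/-- The Liouville function `λ(n) = (-1)^Ω(n)`. -/
def liouville (n : ℕ) : ℤ := (-1) ^ (ArithmeticFunction.cardFactors n)

/-! A prime `p = l * m + 1` exists by the elementary case of Dirichlet's theorem; then
`n₀ + l * (m * n₀) = p * n₀`, and complete multiplicativity gives `λ(p * n₀) = -λ(n₀)`. -/

theorem liouville_mul {m n : ℕ} (hm : m ≠ 0) (hn : n ≠ 0) :
    liouville (m * n) = liouville m * liouville n := by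
  simp only [liouville, ArithmeticFunction.cardFactors_mul hm hn, pow_add]

theorem liouville_prime {p : ℕ} (hp : p.Prime) : liouville p = -1 := by
  rw [liouville, ArithmeticFunction.cardFactors_apply_prime hp, pow_one]

theorem liouville_prime_mul {p n : ℕ} (hp : p.Prime) (hn : n ≠ 0) :
    liouville (p * n) = -liouville n := by
  rw [liouville_mul hp.ne_zero hn, liouville_prime hp, neg_one_mul]

theorem Nat.exists_prime_eq_mul_add_one {l : ℕ} (hl : l ≠ 0) :
    ∃ m p, 0 < m ∧ p.Prime ∧ p = l * m + 1 := by
  obtain ⟨p, hp, -, hmod⟩ := Nat.exists_prime_gt_modEq_one 0 hl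
  obtain ⟨m, hm⟩ := (Nat.modEq_iff_dvd' hp.one_le).mp hmod.symm
  have hp2 := hp.two_le
  refine ⟨m, p, Nat.pos_of_ne_zero ?_, hp, by omega⟩
  rintro rfl
  omega

/-- For every positive `n₀` and `l` there is `k ≥ 1` with `λ(n₀ + l·k) = -λ(n₀)`. -/
theorem exists_sign_flip_in_AP (n₀ l : ℕ) (hn₀ : 0 < n₀) (hl : 0 < l) :
    ∃ k : ℕ, 1 ≤ k ∧ liouville (n₀ + l * k) = -liouville n₀ := by
  obtain ⟨m, p, hm, hp, rfl⟩ := Nat.exists_prime_eq_mul_add_one hl.ne'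
  refine ⟨m * n₀, Nat.mul_pos hm hn₀, ?_⟩
  have hshift : n₀ + l * (m * n₀) = (l * m + 1) * n₀ := by ring
  rw [hshift, liouville_prime_mul hp hn₀.ne']
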